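/- arXiv:0707.0110 — 3 statements merged into one kernel-verified Lean document; each statement's English description precedes it below -/
import Mathlib

section
/- Let S = -(1/2)log(1+ε) be a 3×3 symmetric matrix function of ε, S̃ = S - (1/3)(Tr S)·I its trace-free part, and β = (1/2)Tr(S̃²). Then β = (1/8)Tr(ε²) - (1/24)(Tr ε)² + O(‖ε‖³). -/
open Matrix

attribute [local instance] Matrix.linftyOpNormedRing Matrix.linftyOpNormedAlgebra

/-- The matrix logarithm `log (1 + ε)` defined by the power series
`∑_{k ≥ 1} (-1)^(k+1) ε^k / k`. -/
noncomputable def matLog1p (ε : Matrix (Fin 3) (Fin 3) ℝ) :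
    Matrix (Fin 3) (Fin 3) ℝ :=
  ∑' k : ℕ, ((-1 : ℝ) ^ k / (k + 1)) • ε ^ (k + 1)

attribute [local irreducible] matLog1p

private lemma entry_le_norm (A : Matrix (Fin 3) (Fin 3) ℝ) (i : Fin 3) :
    |A i i| ≤ ‖A‖ := by
  have h : ‖A i i‖₊ ≤ ‖A‖₊ := by
    rw [Matrix.linfty_opNNNorm_def]
    exact le_trans
      (Finset.single_le_sum (f := fun j => ‖A i j‖₊) (fun _ _ => zero_le)
        (Finset.mem_univ i))
      (Finset.le_sup (f := fun i => ∑ j : Fin 3, ‖A i j‖₊) (Finset.mem_univ i))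
  exact_mod_cast h

private lemma trace_abs_le (A : Matrix (Fin 3) (Fin 3) ℝ) : |A.trace| ≤ 3 * ‖A‖ := by
  have h1 : |A.trace| ≤ ∑ i : Fin 3, |A i i| := by
    rw [Matrix.trace]
    exact Finset.abs_sum_le_sum_abs _ _
  have h2 : ∑ i : Fin 3, |A i i| ≤ ∑ _i : Fin 3, ‖A‖ :=
    Finset.sum_le_sum fun i _ => entry_le_norm A i
  simpa using h1.trans h2

private lemma term_norm_le (ε : Matrix (Fin 3) (Fin 3) ℝ) (k : ℕ) :
    ‖((-1 : ℝ) ^ k / (k + 1)) • ε ^ (k + 1)‖ ≤ (1 / (k + 1)) * ‖ε‖ ^ (k + 1) := by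
  rw [norm_smul]
  have h1 : ‖((-1 : ℝ) ^ k / (k + 1))‖ = 1 / (k + 1) := by
    rw [Real.norm_eq_abs, abs_div, abs_pow, abs_neg, abs_one, one_pow]
    congr 1
    exact abs_of_nonneg (by positivity)
  rw [h1]
  gcongr
  exact norm_pow_le' ε k.succ_pos

private lemma summable_matLog (ε : Matrix (Fin 3) (Fin 3) ℝ) (hε : ‖ε‖ < 1) :
    Summable (fun k : ℕ => ((-1 : ℝ) ^ k / (k + 1)) • ε ^ (k + 1)) := by
  apply Summable.of_norm_bounded (g := fun k : ℕ => ‖ε‖ * ‖ε‖ ^ k)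
  · exact (summable_geometric_of_lt_one (norm_nonneg _) hε).mul_left _
  · intro k
    refine (term_norm_le ε k).trans ?_
    rw [pow_succ, mul_comm (‖ε‖ ^ k)]
    have h1 : (1 : ℝ) / (k + 1) ≤ 1 := by
      rw [div_le_one (by positivity)]; linarith [Nat.cast_nonneg (α := ℝ) k]
    exact mul_le_of_le_one_left (by positivity) h1

private lemma matLog_sub_le (ε : Matrix (Fin 3) (Fin 3) ℝ) (hε : ‖ε‖ ≤ 1 / 2) :
    ‖matLog1p ε - ε‖ ≤ ‖ε‖ ^ 2 := by
  have hε1 : ‖ε‖ < 1 := lt_of_le_of_lt hε (by norm_num)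
  set x := ‖ε‖ with hx
  have hx0 : 0 ≤ x := norm_nonneg _
  set f : ℕ → Matrix (Fin 3) (Fin 3) ℝ :=
    fun k => ((-1 : ℝ) ^ k / (k + 1)) • ε ^ (k + 1) with hf
  have hsum : Summable f := summable_matLog ε hε1
  have hf0 : f 0 = ε := by simp [hf]
  have hEeq : matLog1p ε - ε = ∑' k : ℕ, f (k + 1) := by
    rw [matLog1p,
      show (∑' k : ℕ, ((-1 : ℝ) ^ k / (k + 1)) • ε ^ (k + 1)) = ∑' k : ℕ, f k from rfl,
      Summable.tsum_eq_zero_add hsum, hf0]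
    abel
  have hbound : ∀ k : ℕ, ‖f (k + 1)‖ ≤ (x ^ 2 / 2) * x ^ k := by
    intro k
    refine (term_norm_le ε (k + 1)).trans ?_
    have h1 : (1 : ℝ) / (((k + 1 : ℕ) : ℝ) + 1) ≤ 1 / 2 := by
      rw [div_le_div_iff₀ (by positivity) (by norm_num)]
      push_cast; linarith [Nat.cast_nonneg (α := ℝ) k]
    have h3 : (0 : ℝ) ≤ x ^ (k + 1 + 1) := pow_nonneg hx0 _
    calc (1 / (((k + 1 : ℕ) : ℝ) + 1)) * x ^ (k + 1 + 1)
        ≤ (1 / 2) * x ^ (k + 1 + 1) := mul_le_mul_of_nonneg_right h1 h3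
      _ = (x ^ 2 / 2) * x ^ k := by ring
  have hgs : Summable (fun k : ℕ => (x ^ 2 / 2) * x ^ k) :=
    (summable_geometric_of_lt_one hx0 hε1).mul_left _
  have hns : Summable (fun k : ℕ => ‖f (k + 1)‖) :=
    Summable.of_nonneg_of_le (fun k => norm_nonneg _) hbound hgs
  calc ‖matLog1p ε - ε‖ = ‖∑' k : ℕ, f (k + 1)‖ := by rw [hEeq]
    _ ≤ ∑' k : ℕ, ‖f (k + 1)‖ := norm_tsum_le_tsum_norm hns
    _ ≤ ∑' k : ℕ, (x ^ 2 / 2) * x ^ k := Summable.tsum_le_tsum hbound hns hgs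
    _ = (x ^ 2 / 2) * (1 - x)⁻¹ := by
        rw [tsum_mul_left, tsum_geometric_of_lt_one hx0 hε1]
    _ ≤ x ^ 2 := by
        have h2 : (1 - x)⁻¹ ≤ 2 := by
          rw [inv_le_comm₀ (by linarith) (by norm_num)]
          linarith
        nlinarith [sq_nonneg x]

private lemma trace_aux (S : Matrix (Fin 3) (Fin 3) ℝ) (c : ℝ) :
    ((S - c • 1) * (S - c • 1)).trace = (S * S).trace - 2 * c * S.trace + 3 * c ^ 2 := by
  have e1 : S * ((c : ℝ) • 1) = c • S := by rw [mul_smul_comm, mul_one]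
  have e2 : ((c : ℝ) • 1) * S = c • S := by rw [smul_mul_assoc, one_mul]
  have e3 : ((c : ℝ) • 1) * ((c : ℝ) • (1 : Matrix (Fin 3) (Fin 3) ℝ)) = (c * c) • 1 := by
    rw [smul_mul_assoc, mul_smul_comm, mul_one, smul_smul]
  rw [sub_mul, mul_sub, mul_sub, e1, e2, e3, Matrix.trace_sub, Matrix.trace_sub,
    Matrix.trace_sub, Matrix.trace_smul, Matrix.trace_smul]
  simp only [smul_eq_mul, Matrix.trace_one, Fintype.card_fin]
  push_cast
  ring

private lemma smul_sq_trace (a : ℝ) (L : Matrix (Fin 3) (Fin 3) ℝ) :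
    ((a • L) * (a • L)).trace = a ^ 2 * (L * L).trace := by
  rw [smul_mul_assoc, mul_smul_comm, smul_smul, Matrix.trace_smul, smul_eq_mul]
  ring

private lemma add_sq_trace (A B : Matrix (Fin 3) (Fin 3) ℝ) :
    ((A + B) * (A + B)).trace =
      (A * A).trace + (A * B).trace + (B * A).trace + (B * B).trace := by
  rw [add_mul, mul_add, mul_add, Matrix.trace_add, Matrix.trace_add, Matrix.trace_add]
  ring

/-- Second-order expansion of `β = (1/2)Tr(S̃²)` where `S = -(1/2)·log(1+ε)` and
`S̃ = S - (1/3)(Tr S)·I` is its trace-free part: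
`β = (1/8)Tr(ε²) - (1/24)(Tr ε)² + O(‖ε‖³)`. -/
theorem beta_second_order :
    ∃ C > (0 : ℝ), ∃ δ > (0 : ℝ), ∀ ε : Matrix (Fin 3) (Fin 3) ℝ,
      ε.IsSymm → ‖ε‖ < δ →
        (let S : Matrix (Fin 3) (Fin 3) ℝ := (-(1/2) : ℝ) • matLog1p ε
         let St : Matrix (Fin 3) (Fin 3) ℝ := S - ((1/3 : ℝ) * S.trace) • (1 : Matrix (Fin 3) (Fin 3) ℝ)
         |(1/2 : ℝ) * (St * St).trace -
             ((1/8) * (ε * ε).trace - (1/24) * ε.trace ^ 2)| ≤ C * ‖ε‖ ^ 3) := by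
  refine ⟨10, by norm_num, 1/2, by norm_num, fun ε _hsym hδ => ?_⟩
  intro S St
  set x := ‖ε‖ with hx
  have hx0 : 0 ≤ x := norm_nonneg _
  have hxle : x ≤ 1 / 2 := le_of_lt hδ
  set E : Matrix (Fin 3) (Fin 3) ℝ := matLog1p ε - ε with hE
  have hEn : ‖E‖ ≤ x ^ 2 := matLog_sub_le ε hxle
  have hLEeq : matLog1p ε = ε + E := by rw [hE]; abel
  have hStrfl : St = S - ((1/3 : ℝ) * S.trace) • 1 := rfl
  have hSrfl : S = (-(1/2) : ℝ) • matLog1p ε := rfl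
  have hSt : (St * St).trace =
      (S * S).trace - 2 * ((1/3 : ℝ) * S.trace) * S.trace + 3 * ((1/3 : ℝ) * S.trace) ^ 2 := by
    rw [hStrfl]; exact trace_aux S _
  have hSS : (S * S).trace = (1/4 : ℝ) * (matLog1p ε * matLog1p ε).trace := by
    rw [hSrfl, smul_sq_trace]; norm_num
  have hStr : S.trace = -(1/2 : ℝ) * (matLog1p ε).trace := by
    rw [hSrfl, Matrix.trace_smul, smul_eq_mul]
  have hLL : (matLog1p ε * matLog1p ε).trace =
      (ε * ε).trace + (ε * E).trace + (E * ε).trace + (E * E).trace := by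
    rw [hLEeq]; exact add_sq_trace ε E
  have hLtr : (matLog1p ε).trace = ε.trace + E.trace := by
    rw [hLEeq, Matrix.trace_add]
  have key : (1/2 : ℝ) * (St * St).trace -
      ((1/8) * (ε * ε).trace - (1/24) * ε.trace ^ 2) =
      (1/8 : ℝ) * ((ε * E).trace + (E * ε).trace + (E * E).trace) -
      (1/24 : ℝ) * (2 * (ε.trace * E.trace) + E.trace ^ 2) := by
    rw [hSt, hSS, hStr, hLL, hLtr]; ring
  rw [key]
  clear key hLtr hLL hStr hSS hSt hSrfl hStrfl hLEeq St S
  clear_value E x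
  have h1 : |(ε * E).trace| ≤ 3 * x ^ 3 := by
    refine (trace_abs_le _).trans ?_
    have := norm_mul_le ε E
    nlinarith [norm_nonneg (ε * E), norm_nonneg E, pow_nonneg hx0 2]
  have h2 : |(E * ε).trace| ≤ 3 * x ^ 3 := by
    refine (trace_abs_le _).trans ?_
    have := norm_mul_le E ε
    nlinarith [norm_nonneg (E * ε), norm_nonneg E, pow_nonneg hx0 2]
  have h3 : |(E * E).trace| ≤ 3 * x ^ 4 := by
    refine (trace_abs_le _).trans ?_
    have := norm_mul_le E E
    nlinarith [norm_nonneg (E * E), norm_nonneg E, pow_nonneg hx0 2]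
  have ha' : |ε.trace| ≤ 3 * x := by rw [hx]; exact trace_abs_le ε
  have hb' : |E.trace| ≤ 3 * x ^ 2 := by
    have hb := trace_abs_le E
    linarith
  have h4 : |ε.trace * E.trace| ≤ 9 * x ^ 3 := by
    rw [abs_mul]
    calc |ε.trace| * |E.trace| ≤ (3 * x) * (3 * x ^ 2) :=
          mul_le_mul ha' hb' (abs_nonneg _) (by positivity)
      _ = 9 * x ^ 3 := by ring
  have h5 : E.trace ^ 2 ≤ 9 * x ^ 4 := by
    nlinarith [abs_nonneg E.trace, sq_abs E.trace]
  have hx43 : x ^ 4 ≤ x ^ 3 := by nlinarith [pow_nonneg hx0 3]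
  obtain ⟨h1a, h1b⟩ := abs_le.mp h1
  obtain ⟨h2a, h2b⟩ := abs_le.mp h2
  obtain ⟨h3a, h3b⟩ := abs_le.mp h3
  obtain ⟨h4a, h4b⟩ := abs_le.mp h4
  rw [abs_le]
  constructor <;> nlinarith [sq_nonneg E.trace]
end

section
/- The derivative of the trace of a matrix function: for a smooth real function f with matrix extension, the directional derivative of A ↦ Tr f(A) at a symmetric matrix A in direction δA equals Tr(f'(A)·δA). -/
open Matrix
attribute [local instance] Matrix.linftyOpNormedRing Matrix.linftyOpNormedAlgebra

lemma aux_entry {n : ℕ} (M : Matrix (Fin n) (Fin n) ℝ) (i j : Fin n) : ‖M i j‖ ≤ ‖M‖ := by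
  rw [← coe_nnnorm, ← coe_nnnorm, NNReal.coe_le_coe, Matrix.linfty_opNNNorm_def]
  exact le_trans (Finset.single_le_sum (f := fun j => ‖M i j‖₊) (by simp) (Finset.mem_univ j))
    (Finset.le_sup (f := fun i => ∑ j : Fin n, ‖M i j‖₊) (Finset.mem_univ i))

lemma aux_trace {n : ℕ} (M : Matrix (Fin n) (Fin n) ℝ) : |M.trace| ≤ n * ‖M‖ := by
  calc |M.trace| ≤ ∑ i : Fin n, ‖M i i‖ := by
        simpa [Matrix.trace] using Finset.abs_sum_le_sum_abs (fun i => M i i) Finset.univ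
    _ ≤ ∑ _i : Fin n, ‖M‖ := Finset.sum_le_sum fun i _ => aux_entry M i i
    _ = n * ‖M‖ := by simp [Finset.sum_const, mul_comm]

lemma aux_pow_deriv {n : ℕ} (A δA : Matrix (Fin n) (Fin n) ℝ) (k : ℕ) (t₀ : ℝ) :
    HasDerivAt (fun t : ℝ => (A + t • δA) ^ k)
      (∑ i ∈ Finset.range k, (A + t₀ • δA) ^ i * δA * (A + t₀ • δA) ^ (k - 1 - i)) t₀ := by
  induction k with
  | zero => simp only [pow_zero, Finset.range_zero, Finset.sum_empty]; exact hasDerivAt_const t₀ (1 : Matrix (Fin n) (Fin n) ℝ)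
  | succ k ih =>
    have hB : HasDerivAt (fun t : ℝ => A + t • δA) δA t₀ := by
      have h := ((hasDerivAt_id t₀).smul_const δA).const_add A
      simp only [id_eq, one_smul] at h
      exact h
    have := ih.mul hB
    have e : ((fun y : ℝ => (A + y • δA) ^ k) * fun y : ℝ => A + y • δA) = fun y => (A + y • δA) ^ (k + 1) :=
      funext fun y => (pow_succ _ _).symm
    rw [e] at this
    refine this.congr_deriv (Eq.symm ?_)
    rw [Finset.sum_range_succ]
    rw [Finset.sum_mul]
    congr 1
    · refine Finset.sum_congr rfl fun i hi => ?_
      rw [Finset.mem_range] at hi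
      rw [mul_assoc, mul_assoc, ← pow_succ, show k - 1 - i + 1 = k + 1 - 1 - i by omega, ← mul_assoc]
    · simp [Nat.sub_self]

noncomputable def traceCLM (n : ℕ) : Matrix (Fin n) (Fin n) ℝ →L[ℝ] ℝ :=
  LinearMap.toContinuousLinearMap (Matrix.traceLinearMap (Fin n) ℝ ℝ)

lemma aux_trace_pow_deriv {n : ℕ} (A δA : Matrix (Fin n) (Fin n) ℝ) (k : ℕ) (t₀ : ℝ) :
    HasDerivAt (fun t : ℝ => ((A + t • δA) ^ k).trace)
      ((k : ℝ) * ((A + t₀ • δA) ^ (k - 1) * δA).trace) t₀ := by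
  have h := ((traceCLM n).hasFDerivAt (x := (A + t₀ • δA) ^ k)).comp_hasDerivAt t₀
    (aux_pow_deriv A δA k t₀)
  have hval : (traceCLM n) (∑ i ∈ Finset.range k, (A + t₀ • δA) ^ i * δA * (A + t₀ • δA) ^ (k - 1 - i))
      = (k : ℝ) * ((A + t₀ • δA) ^ (k - 1) * δA).trace := by
    rw [map_sum]
    have : ∀ i ∈ Finset.range k,
        (traceCLM n) ((A + t₀ • δA) ^ i * δA * (A + t₀ • δA) ^ (k - 1 - i))
          = ((A + t₀ • δA) ^ (k - 1) * δA).trace := by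
      intro i hi
      rw [Finset.mem_range] at hi
      show ((A + t₀ • δA) ^ i * δA * (A + t₀ • δA) ^ (k - 1 - i)).trace = _
      rw [Matrix.trace_mul_comm, ← mul_assoc, ← pow_add, show k - 1 - i + i = k - 1 by omega]
    rw [Finset.sum_congr rfl this, Finset.sum_const, Finset.card_range, nsmul_eq_mul]
  rw [← hval]
  exact h

lemma aux_norm_one {n : ℕ} : ‖(1 : Matrix (Fin n) (Fin n) ℝ)‖ ≤ 1 := by
  rw [← Matrix.diagonal_one, Matrix.linfty_opNorm_diagonal]
  refine (pi_norm_le_iff_of_nonneg one_pos.le).2 fun i => by simp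

lemma aux_pow_norm {n : ℕ} (M : Matrix (Fin n) (Fin n) ℝ) (r : ℝ) (h1 : 1 ≤ r) (hM : ‖M‖ ≤ r) (m : ℕ) :
    ‖M ^ m‖ ≤ r ^ m := by
  induction m with
  | zero => rw [pow_zero, pow_zero]; exact aux_norm_one
  | succ m ih =>
    rw [pow_succ, pow_succ]
    calc ‖M ^ m * M‖ ≤ ‖M ^ m‖ * ‖M‖ := norm_mul_le _ _
      _ ≤ r ^ m * r := by
        apply mul_le_mul ih hM (norm_nonneg _) (pow_nonneg (by linarith) _)

lemma aux_summable_deriv (c : ℕ → ℝ)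
    (hc : ∀ r : ℝ, 0 ≤ r → Summable fun k : ℕ => |c k| * r ^ k) (R : ℝ) (hR : 1 ≤ R) :
    Summable fun k : ℕ => (k : ℝ) * |c k| * R ^ (k - 1) := by
  refine Summable.of_nonneg_of_le (fun k => by positivity) (fun k => ?_) (hc (2 * R) (by linarith))
  have h1 : (k : ℝ) ≤ 2 ^ k := by exact_mod_cast (Nat.lt_two_pow_self (n := k)).le
  have h2 : R ^ (k - 1) ≤ R ^ k := pow_le_pow_right₀ hR (Nat.sub_le k 1)
  calc (k : ℝ) * |c k| * R ^ (k - 1) ≤ 2 ^ k * |c k| * R ^ k := by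
        apply mul_le_mul (mul_le_mul h1 le_rfl (abs_nonneg _) (by positivity)) h2 (by positivity)
          (by positivity)
    _ = |c k| * (2 * R) ^ k := by rw [mul_pow]; ring

lemma traceCLM_apply {n : ℕ} (M : Matrix (Fin n) (Fin n) ℝ) : traceCLM n M = M.trace := rfl

noncomputable def mulTraceCLM {n : ℕ} (δA : Matrix (Fin n) (Fin n) ℝ) :
    Matrix (Fin n) (Fin n) ℝ →L[ℝ] ℝ :=
  LinearMap.toContinuousLinearMap
    ((Matrix.traceLinearMap (Fin n) ℝ ℝ).comp (LinearMap.mulRight ℝ δA))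

lemma mulTraceCLM_apply {n : ℕ} (δA M : Matrix (Fin n) (Fin n) ℝ) :
    mulTraceCLM δA M = (M * δA).trace := rfl

/-- Derivative of the trace of a matrix function: for `f` given by an everywhere-convergent
power series `f(x) = ∑ c_k x^k` (with matrix extension `f(A) = ∑ c_k A^k` and derivative
`f'(A) = ∑ k c_k A^(k-1)`), and `A`, `δA` real symmetric matrices, one has
`d/dt|_{t=0} Tr f(A + t·δA) = Tr(f'(A)·δA)`. -/
theorem hasDerivAt_trace_matrix_function {n : ℕ} (c : ℕ → ℝ)
    (hc : ∀ r : ℝ, 0 ≤ r → Summable fun k : ℕ => |c k| * r ^ k)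
    (A δA : Matrix (Fin n) (Fin n) ℝ) (hA : A.IsSymm) (hδA : δA.IsSymm) :
    HasDerivAt (fun t : ℝ => (∑' k : ℕ, c k • (A + t • δA) ^ k).trace)
      (((∑' k : ℕ, (((k : ℝ) + 1) * c (k + 1)) • A ^ k) * δA).trace) 0 := by
  set R : ℝ := ‖A‖ + ‖δA‖ + 1 with hRdef
  have hR1 : 1 ≤ R := by rw [hRdef]; linarith [norm_nonneg A, norm_nonneg δA]
  have hBnorm : ∀ t ∈ Set.Ioo (-1 : ℝ) 1, ‖A + t • δA‖ ≤ R := by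
    intro t ht
    calc ‖A + t • δA‖ ≤ ‖A‖ + ‖t • δA‖ := norm_add_le _ _
      _ = ‖A‖ + |t| * ‖δA‖ := by rw [norm_smul, Real.norm_eq_abs]
      _ ≤ ‖A‖ + 1 * ‖δA‖ := by
          have : |t| ≤ 1 := abs_le.2 ⟨ht.1.le, ht.2.le⟩
          gcongr
      _ ≤ R := by rw [hRdef]; linarith
  -- summability of the matrix series
  have hsum_mat : ∀ t : ℝ, Summable fun k : ℕ => c k • (A + t • δA) ^ k := by
    intro t
    apply Summable.of_norm_bounded (hc (‖A + t • δA‖ + 1) (by positivity))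
    intro k
    rw [norm_smul, Real.norm_eq_abs]
    exact mul_le_mul_of_nonneg_left
      (aux_pow_norm _ _ (by linarith [norm_nonneg (A + t • δA)]) (by linarith) k) (abs_nonneg _)
  -- rewrite the function
  have hfun : (fun t : ℝ => (∑' k : ℕ, c k • (A + t • δA) ^ k).trace)
      = fun t : ℝ => ∑' k : ℕ, c k * ((A + t • δA) ^ k).trace := by
    funext t
    rw [← traceCLM_apply, (traceCLM n).map_tsum (hsum_mat t)]
    exact tsum_congr fun k => by rw [traceCLM_apply, Matrix.trace_smul, smul_eq_mul]
  -- summability of the derived series coefficients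
  have hder := aux_summable_deriv c hc R hR1
  -- summability of RHS matrix series
  have hsum_rhs : Summable fun k : ℕ => (((k : ℝ) + 1) * c (k + 1)) • A ^ k := by
    apply Summable.of_norm_bounded (g := fun k : ℕ => ((k : ℝ) + 1) * |c (k + 1)| * R ^ k)
    · exact ((summable_nat_add_iff 1).2 hder).congr fun k => by
        rw [Nat.add_sub_cancel]; push_cast; ring
    · intro k
      rw [norm_smul, Real.norm_eq_abs, abs_mul]
      have h1 : |(k : ℝ) + 1| = (k : ℝ) + 1 := abs_of_nonneg (by positivity)
      rw [h1, mul_assoc]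
      calc ((k:ℝ)+1) * (|c (k+1)| * ‖A ^ k‖) ≤ ((k:ℝ)+1) * (|c (k+1)| * R ^ k) := by
            gcongr
            exact aux_pow_norm A R hR1 (by rw [hRdef]; linarith [norm_nonneg δA]) k
        _ = ((k:ℝ)+1) * |c (k+1)| * R ^ k := by ring
  -- rewrite the RHS
  have hRHS : ((∑' k : ℕ, (((k : ℝ) + 1) * c (k + 1)) • A ^ k) * δA).trace
      = ∑' k : ℕ, ((k : ℝ) + 1) * c (k + 1) * (A ^ k * δA).trace := by
    rw [← mulTraceCLM_apply, (mulTraceCLM δA).map_tsum hsum_rhs]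
    exact tsum_congr fun k => by
      rw [mulTraceCLM_apply, Matrix.smul_mul, Matrix.trace_smul, smul_eq_mul]
  -- the series of derivatives
  set u : ℕ → ℝ := fun k => (n : ℝ) * ((k : ℝ) * |c k| * R ^ (k - 1) * ‖δA‖) with hudef
  have hu : Summable u := ((hder.mul_right ‖δA‖).mul_left (n : ℝ))
  have hg' : ∀ (k : ℕ), ∀ t ∈ Set.Ioo (-1 : ℝ) 1,
      ‖c k * ((k : ℝ) * ((A + t • δA) ^ (k - 1) * δA).trace)‖ ≤ u k := by
    intro k t ht
    have htr : |((A + t • δA) ^ (k - 1) * δA).trace| ≤ (n : ℝ) * (R ^ (k - 1) * ‖δA‖) := by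
      refine (aux_trace _).trans ?_
      apply mul_le_mul_of_nonneg_left _ (Nat.cast_nonneg n)
      calc ‖(A + t • δA) ^ (k - 1) * δA‖ ≤ ‖(A + t • δA) ^ (k - 1)‖ * ‖δA‖ := norm_mul_le _ _
        _ ≤ R ^ (k - 1) * ‖δA‖ := by
            apply mul_le_mul_of_nonneg_right
              (aux_pow_norm _ _ hR1 (hBnorm t ht) _) (norm_nonneg _)
    rw [Real.norm_eq_abs, abs_mul, abs_mul, abs_of_nonneg (Nat.cast_nonneg' k : (0:ℝ) ≤ k)]
    calc |c k| * ((k : ℝ) * |((A + t • δA) ^ (k - 1) * δA).trace|)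
        ≤ |c k| * ((k : ℝ) * ((n : ℝ) * (R ^ (k - 1) * ‖δA‖))) := by
          apply mul_le_mul_of_nonneg_left
            (mul_le_mul_of_nonneg_left htr (Nat.cast_nonneg k)) (abs_nonneg _)
      _ = u k := by rw [hudef]; ring
  have hg0 : Summable fun k : ℕ => c k * ((A + (0:ℝ) • δA) ^ k).trace := by
    apply Summable.of_norm_bounded (g := fun k => (n : ℝ) * (|c k| * R ^ k))
      ((hc R (by positivity)).mul_left _)
    intro k
    rw [Real.norm_eq_abs, abs_mul]
    calc |c k| * |((A + (0:ℝ) • δA) ^ k).trace| ≤ |c k| * ((n : ℝ) * ‖(A + (0:ℝ) • δA) ^ k‖) :=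
          mul_le_mul_of_nonneg_left (aux_trace _) (abs_nonneg _)
      _ ≤ |c k| * ((n : ℝ) * R ^ k) := by
          apply mul_le_mul_of_nonneg_left (mul_le_mul_of_nonneg_left
            (aux_pow_norm _ _ hR1 (hBnorm 0 (by norm_num)) k) (Nat.cast_nonneg n)) (abs_nonneg _)
      _ = (n : ℝ) * (|c k| * R ^ k) := by ring
  have h0mem : (0 : ℝ) ∈ Set.Ioo (-1 : ℝ) 1 := by norm_num
  have main := hasDerivAt_tsum_of_isPreconnected hu isOpen_Ioo (isPreconnected_Ioo)
    (fun k t ht => (aux_trace_pow_deriv A δA k t).const_mul (c k)) hg' h0mem hg0 h0mem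
  rw [hfun, hRHS]
  refine main.congr_deriv (Eq.symm ?_)
  -- identify the sum of derivatives
  have hg'sum : Summable fun k : ℕ =>
      c k * ((k : ℝ) * ((A + (0:ℝ) • δA) ^ (k - 1) * δA).trace) :=
    Summable.of_norm_bounded hu fun k => hg' k 0 h0mem
  rw [Summable.tsum_eq_zero_add hg'sum]
  simp only [Nat.cast_zero, zero_mul, mul_zero, zero_add, zero_smul, add_zero]
  exact tsum_congr fun k => by
    rw [Nat.add_sub_cancel]
    push_cast
    ring
end

section
/- The 3×3 matrix N = [[3,0,0],[-a,3,-1],[c₁,c₂,4+c₃]] with c₁ = (P⁰+ρ⁰-aP_y⁰)/P_x⁰, c₂ = (P_y⁰-2Q_y⁰)/P_x⁰, c₃ = (P_y⁰-2Q_x⁰)/P_x⁰ has all eigenvalues with positive real part if P_x⁰ > 0 and 6P_x⁰+2P_y⁰-3Q_x⁰-Q_y⁰ > 0 and 7P_x⁰+P_y⁰-2Q_x⁰ > 0. -/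
open Matrix

lemma quad_root_pos_re (T D : ℝ) (hT : 0 < T) (hD : 0 < D) (z : ℂ)
    (hz : z^2 - (T:ℂ)*z + (D:ℂ) = 0) : 0 < z.re := by
  obtain ⟨hre, him⟩ := Complex.ext_iff.mp hz
  simp [Complex.ext_iff, pow_two, Complex.add_re, Complex.sub_re, Complex.mul_re,
    Complex.mul_im, Complex.add_im, Complex.sub_im, Complex.ofReal_re, Complex.ofReal_im] at hre him
  rcases mul_eq_zero.mp (show z.im * (2*z.re - T) = 0 by linarith) with h | h
  · rw [h] at hre
    by_contra hx
    push_neg at hx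
    nlinarith [sq_nonneg z.re, mul_nonneg hT.le (neg_nonneg.mpr hx)]
  · linarith

/-- The matrix `N = [[3,0,0],[-a,3,-1],[c₁,c₂,4+c₃]]` with
`c₁ = (P⁰+ρ⁰-aP_y⁰)/P_x⁰`, `c₂ = (P_y⁰-2Q_y⁰)/P_x⁰`, `c₃ = (P_y⁰-2Q_x⁰)/P_x⁰`
has all eigenvalues with positive real part, provided `P_x⁰ > 0`,
`6P_x⁰+2P_y⁰-3Q_x⁰-Q_y⁰ > 0` and `7P_x⁰+P_y⁰-2Q_x⁰ > 0`. -/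
theorem eigenvalues_pos_real_part (a rho0 P0 Px Py Qx Qy : ℝ)
    (hPx : 0 < Px)
    (h1 : 0 < 6*Px + 2*Py - 3*Qx - Qy)
    (h2 : 0 < 7*Px + Py - 2*Qx) :
    let c₁ : ℝ := (P0 + rho0 - a*Py) / Px
    let c₂ : ℝ := (Py - 2*Qy) / Px
    let c₃ : ℝ := (Py - 2*Qx) / Px
    let N : Matrix (Fin 3) (Fin 3) ℝ := !![3, 0, 0; -a, 3, -1; c₁, c₂, 4 + c₃]
    ∀ z : ℂ, z ∈ spectrum ℂ (N.map (Complex.ofReal)) → 0 < z.re := by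
  intro c₁ c₂ c₃ N z hz
  rw [spectrum.mem_iff] at hz
  have hdet : ((algebraMap ℂ (Matrix (Fin 3) (Fin 3) ℂ) z) - N.map Complex.ofReal).det = 0 := by
    by_contra h
    exact hz ((Matrix.isUnit_iff_isUnit_det _).mpr (isUnit_iff_ne_zero.mpr h))
  unfold N at hdet
  simp [Matrix.det_fin_three, Matrix.algebraMap_matrix_apply, Matrix.map_apply] at hdet
  have hfac : (z - 3) * ((z - 3) * (z - (4 + (c₃:ℂ))) + (c₂:ℂ)) = 0 := by
    linear_combination hdet
  rcases mul_eq_zero.mp hfac with h | h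
  · rw [sub_eq_zero] at h
    rw [h]; norm_num
  · have hT : 0 < 7 + c₃ := by
      have := div_pos h2 hPx
      unfold c₃
      rw [show (7*Px + Py - 2*Qx)/Px = 7 + (Py - 2*Qx)/Px by field_simp; ring] at this
      exact this
    have hD : 0 < 12 + 3*c₃ + c₂ := by
      have := div_pos h1 hPx
      unfold c₂ c₃
      rw [show (6*Px + 2*Py - 3*Qx - Qy)/Px = (12 + 3*((Py-2*Qx)/Px) + (Py-2*Qy)/Px)/2 by field_simp; ring] at this
      linarith
    exact quad_root_pos_re (7 + c₃) (12 + 3*c₃ + c₂) hT hD z (by push_cast; linear_combination h)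
end
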